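/- arXiv:2212.11129 — 3 statements merged into one kernel-verified Lean document; each statement's English description precedes it below -/
import Mathlib

section
/- Let Φ be the composite map acting on 20V configurations on T_m as follows: (i) reverse the orientation of every vertical edge (vertical flip), (ii) reflect the whole configuration through the horizontal line y = (m−1)/2, (iii) apply the shear (x,y) ↦ (x, y−x) (which sends the reflected edge directions (1,1), (1,0), (0,1) to (1,0), (1,−1), (0,1)). Then Φ is a bijection from the set of DWBC3 configurations on T_m onto a set of ice-rule configurations on T_m (the 20V₂ model), and for every k ∈ {1,…,m}, Φ maps configurations with DWBC3 statistic k to configurations whose 20V₂ statistic (the position, counted from the bottom, of the topmost vertex on the line x = 0 visited by a path of the image configuration) equals m+1−k. Consequently Z_{m,k}^{20V3} = Z_{m,m+1−k}^{20V2} for all k = 1, 2, …, m. -/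
open Real

namespace TwentyV

/-- The three edge directions of the triangular lattice: `(1,0)`, `(0,1)`, `(1,-1)`. -/
def dir : Fin 3 → ℤ × ℤ := ![(1, 0), (0, 1), (1, -1)]

/-- The triangular domain `T_m`: vertices `(x,y)` with `x ≤ 0`, `y ≤ m-1`, `x+y ≥ 0`. -/
def Tri (m : ℕ) : Set (ℤ × ℤ) := {v | v.1 ≤ 0 ∧ v.2 ≤ (m : ℤ) - 1 ∧ 0 ≤ v.1 + v.2}

/-- An orientation of the edges of the triangular lattice: the edge joining `v` and
`v + dir d` is recorded at base point `v`, and the value `true` means that it is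
oriented from `v` towards `v + dir d`. -/
abbrev Orientation := ℤ × ℤ → Fin 3 → Bool

/-- The edge `(v, d)` is incident to the triangle `T_m`. -/
def Incident (m : ℕ) (v : ℤ × ℤ) (d : Fin 3) : Prop := v ∈ Tri m ∨ v + dir d ∈ Tri m

/-- The number of edges incoming at the vertex `u`. -/
def inDeg (o : Orientation) (u : ℤ × ℤ) : ℕ :=
  (Finset.univ.filter fun d : Fin 3 => o (u - dir d) d = true).card +
    (Finset.univ.filter fun d : Fin 3 => o u d = false).card

/-- Ice rule: every vertex of `T_m` has exactly three incoming (hence three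
outgoing) incident edges. -/
def IceRule (m : ℕ) (o : Orientation) : Prop := ∀ u ∈ Tri m, inDeg o u = 3

/-- DWBC3 boundary conditions on `T_m`: all East boundary half-edges (at vertices
`(0,y)`) point into the domain, all North boundary half-edges (at vertices
`(x,m-1)`) point out of the domain, and the diagonal boundary half-edges (at
vertices `(-y,y)`) point into the domain on the upper half and out of it on the
lower half (for odd `m` the central vertex gets one incoming and one outgoing
half-edge).  In addition, all edges not incident to `T_m` are normalized to
`true`, so that the set of configurations is finite. -/
def DWBC3 (m : ℕ) (o : Orientation) : Prop :=
  (∀ y : ℤ, 0 ≤ y → y ≤ (m : ℤ) - 1 → o (0, y) 0 = false ∧ o (0, y) 2 = false) ∧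
  (∀ x : ℤ, 1 - (m : ℤ) ≤ x → x ≤ 0 →
      o (x, (m : ℤ) - 1) 1 = true ∧ o (x - 1, (m : ℤ)) 2 = false) ∧
  (∀ y : ℤ, 0 ≤ y → y ≤ (m : ℤ) - 1 →
      (o (-y - 1, y) 0 = true ↔ (m : ℤ) - 1 ≤ 2 * y) ∧
      (o (-y, y - 1) 1 = true ↔ (m : ℤ) ≤ 2 * y)) ∧
  (∀ v d, ¬ Incident m v d → o v d = true)

/-- The set of 20V configurations with DWBC3 on `T_m`. -/
def Config (m : ℕ) : Set Orientation := {o | IceRule m o ∧ DWBC3 m o}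

/-- `Z_m^{20V3}`: the number of 20V configurations with DWBC3 on `T_m`. -/
noncomputable def Z (m : ℕ) : ℕ := (Config m).ncard

end TwentyV
namespace TwentyV

/-- The edge `(v, d)` is occupied by an osculating Schröder path step: under the
standard bijection, horizontal edges are traversed rightwards (step `(1,0)`),
vertical edges downwards (step `(0,-1)`), diagonal edges down-rightwards
(step `(1,-1)`). -/
def Occupied (o : Orientation) (v : ℤ × ℤ) (d : Fin 3) : Prop :=
  if d = 1 then o v d = false else o v d = true

/-- The vertex `u` is visited by a path, i.e. some incident edge is occupied. -/
def Visited (o : Orientation) (u : ℤ × ℤ) : Prop :=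
  ∃ d : Fin 3, Occupied o (u - dir d) d ∨ Occupied o u d

/-- The statistic of the configuration `o` equals `k`: the topmost vertex on the
East boundary line `x = 0` visited by a path is `(0, k-1)`, i.e. has position `k`
counted from the bottom. -/
def HasStat (m : ℕ) (o : Orientation) (k : ℕ) : Prop :=
  Visited o (0, (k : ℤ) - 1) ∧
    ∀ j : ℤ, (k : ℤ) - 1 < j → j ≤ (m : ℤ) - 1 → ¬ Visited o (0, j)

/-- The refined number `Z_{m,k}^{20V3}` of DWBC3 configurations with statistic `k`. -/
noncomputable def Zref (m k : ℕ) : ℕ := {o ∈ Config m | HasStat m o k}.ncard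

/-- The refined generating polynomial `Z_m^{20V3}(τ) = ∑_{k=1}^m Z_{m,k}^{20V3} τ^{k-1}`. -/
noncomputable def Zpoly (m : ℕ) (τ : ℝ) : ℝ :=
  ∑ k ∈ Finset.Icc 1 m, (Zref m k : ℝ) * τ ^ (k - 1)

end TwentyV

namespace TwentyV

/-- The composite map `Φ = Shear ∘ Reflection ∘ VerticalFlip` on 20V configurations of
`T_m`, expressed on edge orientations.  The vertical flip complements the vertical
path steps, i.e. reverses all vertical arrows; the reflection through the line
`y = (m-1)/2` and the shear `(x,y) ↦ (x, y-x)` then transport the arrow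
configuration by the point map `φ(x,y) = (x, m-1-y-x)`, which maps horizontal edges
to diagonal ones, diagonal edges to horizontal ones, and vertical edges to vertical
ones with their geometric direction inverted (so that, together with the vertical
flip, the arrow on the vertical edge based at `(x, m-2-y-x)` is reversed). -/
def Phi (m : ℕ) (o : Orientation) : Orientation := fun u d =>
  if d = 0 then o (u.1, (m : ℤ) - 1 - u.2 - u.1) 2
  else if d = 1 then !(o (u.1, (m : ℤ) - 2 - u.2 - u.1) 1)
  else o (u.1, (m : ℤ) - 1 - u.2 - u.1) 0

/-- `Z_{m,k}^{20V2}`: the number of configurations of the image model (the 20V₂ model,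
i.e. the image of the DWBC3 configurations under `Φ`) whose statistic equals `k`. -/
noncomputable def Zref2 (m k : ℕ) : ℕ :=
  {o ∈ Phi m '' Config m | HasStat m o k}.ncard

/-!
`Φ` is an involution: its point map `φ(x,y) = (x, m-1-y-x)` is one, and the reversal of the
vertical arrows cancels itself. It transports in-degrees along `φ`, which maps `T_m` onto itself,
so the ice rule survives.

On the East column of a DWBC3 configuration both East half-edges point inwards, so the ice rule at
`(0,y)` leaves room for exactly one further incoming arrow: a path reaching `(0,y)` (from the left,
diagonally or from above) continues straight down, and at most one path arrives. Hence the
occupied vertical edges of the column form a bottom segment, nonempty and proper by the boundary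
conditions, and the statistic `k` is the height of its top vertex `(0, k-1)`. In `Φ o` the vertex
`(0,j)` is visited iff the vertical edge above `(0, m-1-j)` is empty in `o`, so the visited vertices
of its East column are those with `j ≤ m-k`: the statistic becomes `m+1-k`, and conversely.
Injectivity of `Φ` then identifies the two refined counts.
-/

lemma inDeg_mk (o : Orientation) (x y : ℤ) :
    inDeg o (x, y) =
      (o (x - 1, y) 0).toNat + (o (x, y - 1) 1).toNat + (o (x - 1, y + 1) 2).toNat +
        ((!o (x, y) 0).toNat + (!o (x, y) 1).toNat + (!o (x, y) 2).toNat) := by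
  rw [inDeg, Finset.card_filter, Finset.card_filter, Fin.sum_univ_three, Fin.sum_univ_three]
  cases o (x, y) 0 <;> cases o (x, y) 1 <;> cases o (x, y) 2 <;>
    simp [dir, Bool.toNat, cond_eq_ite, Matrix.cons_val_two, sub_eq_add_neg, add_assoc]

section PhiApply
variable (m : ℕ) (o : Orientation) (x y : ℤ)

@[simp] lemma Phi_apply_zero : Phi m o (x, y) 0 = o (x, m - 1 - y - x) 2 := rfl
@[simp] lemma Phi_apply_one : Phi m o (x, y) 1 = !o (x, m - 2 - y - x) 1 := rfl
@[simp] lemma Phi_apply_two : Phi m o (x, y) 2 = o (x, m - 1 - y - x) 0 := rfl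

end PhiApply

lemma Phi_involutive (m : ℕ) : Function.Involutive (Phi m) := by
  intro o
  funext ⟨x, y⟩ d
  fin_cases d <;> simp <;> ring_nf

lemma inDeg_Phi (m : ℕ) (o : Orientation) (x y : ℤ) :
    inDeg (Phi m o) (x, y) = inDeg o (x, m - 1 - y - x) := by
  simp only [inDeg_mk, Phi_apply_zero, Phi_apply_one, Phi_apply_two, Bool.not_not]
  ring_nf

lemma iceRule_Phi {m : ℕ} {o : Orientation} (h : IceRule m o) : IceRule m (Phi m o) := by
  rintro ⟨x, y⟩ hxy
  rw [inDeg_Phi]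
  exact h _ (by simp only [Tri, Set.mem_ofPred_eq] at hxy ⊢; omega)

lemma visited_iff (o : Orientation) (x y : ℤ) :
    Visited o (x, y) ↔
      o (x - 1, y) 0 = true ∨ o (x, y) 0 = true ∨ o (x, y - 1) 1 = false ∨
        o (x, y) 1 = false ∨ o (x - 1, y + 1) 2 = true ∨ o (x, y) 2 = true := by
  simp only [Visited, Fin.exists_fin_succ]
  simp [Occupied, dir, Matrix.cons_val_two, sub_eq_add_neg]
  tauto

section EastColumn

/-! A vertical edge carries a path iff its arrow points down, i.e. `o (0, y) 1 = false`. -/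

variable {m : ℕ} {o : Orientation} {y : ℤ}

/-- Exactly one of: a path enters `(0, y)` from the left, diagonally, or from above, or the edge
below `(0, y)` is empty. -/
lemma east_inflow_eq_one (ho : o ∈ Config m) (hy0 : 0 ≤ y) (hy : y ≤ m - 1) :
    (o (-1, y) 0).toNat + (o (-1, y + 1) 2).toNat + (!o (0, y) 1).toNat +
      (o (0, y - 1) 1).toNat = 1 := by
  have hdeg := ho.1 (0, y) ⟨le_rfl, hy, by simpa using hy0⟩
  obtain ⟨h0, h2⟩ := ho.2.1 y hy0 hy
  rw [inDeg_mk] at hdeg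
  simp only [zero_sub, h0, h2, Bool.not_false, Bool.toNat_true] at hdeg
  omega

lemma occupied_below_of_inflow (ho : o ∈ Config m) (hy0 : 0 ≤ y) (hy : y ≤ m - 1)
    (h : o (-1, y) 0 = true ∨ o (-1, y + 1) 2 = true ∨ o (0, y) 1 = false) :
    o (0, y - 1) 1 = false := by
  have := east_inflow_eq_one ho hy0 hy
  rw [← Bool.not_eq_true]
  intro hb
  rcases h with h | h | h <;> simp [h, hb] at this

lemma vacant_above_of_side_inflow (ho : o ∈ Config m) (hy0 : 0 ≤ y) (hy : y ≤ m - 1)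
    (h : o (-1, y) 0 = true ∨ o (-1, y + 1) 2 = true) : o (0, y) 1 = true := by
  have := east_inflow_eq_one ho hy0 hy
  rw [← Bool.not_eq_false]
  intro hb
  rcases h with h | h <;> simp [h, hb] at this <;> omega

lemma visited_east_iff (ho : o ∈ Config m) (hy0 : 0 ≤ y) (hy : y ≤ m - 1) :
    Visited o (0, y) ↔ o (0, y - 1) 1 = false := by
  obtain ⟨h0, h2⟩ := ho.2.1 y hy0 hy
  have hbelow := occupied_below_of_inflow ho hy0 hy
  rw [visited_iff]
  simp only [zero_sub, h0, h2] at hbelow ⊢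
  tauto

lemma visited_Phi_east_iff (ho : o ∈ Config m) (hy0 : 0 ≤ y) (hy : y ≤ m - 1) :
    Visited (Phi m o) (0, m - 1 - y) ↔ o (0, y) 1 = true := by
  obtain ⟨h0, h2⟩ := ho.2.1 y hy0 hy
  have hbelow := occupied_below_of_inflow ho hy0 hy
  have hside := vacant_above_of_side_inflow ho hy0 hy
  rw [visited_iff]
  simp only [Phi_apply_zero, Phi_apply_one, Phi_apply_two]
  ring_nf at h0 h2 hbelow hside ⊢
  simp only [h0, h2, Bool.not_eq_eq_eq_not, Bool.not_false] at hbelow hside ⊢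
  revert hbelow hside
  cases o (0, y) 1 <;> cases o (0, -1 + y) 1 <;> simp +contextual

lemma east_occupied_of_le (ho : o ∈ Config m) {z : ℤ} (hy : -1 ≤ y) (hyz : y ≤ z)
    (hz : z ≤ m - 1) (h : o (0, z) 1 = false) : o (0, y) 1 = false := by
  induction y, hyz using Int.leInductionDown with
  | base => exact h
  | pred w hwz ih =>
    simpa using occupied_below_of_inflow ho (by omega) (by omega) (Or.inr (Or.inr (ih (by omega))))

lemma east_bottom_occupied (ho : o ∈ Config m) (hm : 1 ≤ m) : o (0, -1) 1 = false := by
  simpa [Nat.one_le_iff_ne_zero.mp hm] using (ho.2.2.2.1 0 le_rfl (by omega)).2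

lemma east_top_vacant (ho : o ∈ Config m) (hm : 1 ≤ m) : o (0, m - 1) 1 = true :=
  (ho.2.2.1 0 (by omega) le_rfl).1

end EastColumn

section Statistic

variable {m k : ℕ} {o : Orientation}

lemma hasStat_iff (ho : o ∈ Config m) (hk1 : 1 ≤ k) (hk : k ≤ m) :
    HasStat m o k ↔ o (0, k - 2) 1 = false ∧ o (0, k - 1) 1 = true := by
  rw [HasStat, visited_east_iff ho (by omega) (by omega), show (k : ℤ) - 1 - 1 = k - 2 by ring]
  refine and_congr_right fun hbelow => ⟨fun habove => ?_, fun hvacant j hj hjm hv => ?_⟩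
  · rcases hk.lt_or_eq with hk | rfl
    · simpa [visited_east_iff ho (by omega) (by omega : (k : ℤ) ≤ m - 1)] using
        habove k (by omega) (by omega)
    · exact east_top_vacant ho hk1
  · rw [visited_east_iff ho (by omega) hjm] at hv
    simp [east_occupied_of_le ho (by omega) (by omega : (k : ℤ) - 1 ≤ j - 1) (by omega) hv]
      at hvacant

lemma hasStat_Phi_iff (ho : o ∈ Config m) (hk1 : 1 ≤ k) (hk : k ≤ m) :
    HasStat m (Phi m o) (m + 1 - k) ↔ o (0, k - 2) 1 = false ∧ o (0, k - 1) 1 = true := by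
  have hcast : ((m + 1 - k : ℕ) : ℤ) - 1 = m - 1 - (k - 1) := by omega
  rw [HasStat, hcast, visited_Phi_east_iff ho (by omega) (by omega), and_comm]
  refine and_congr_left fun _ => ⟨fun hvacant => ?_, fun hocc j hj hjm hv => ?_⟩
  · rcases hk1.eq_or_lt with rfl | hk1
    · exact east_bottom_occupied ho (by omega)
    · have := hvacant (m - 1 - (k - 2)) (by omega) (by omega)
      rw [visited_Phi_east_iff ho (by omega) (by omega)] at this
      simpa using this
  · rw [show j = m - 1 - (m - 1 - j) by ring, visited_Phi_east_iff ho (by omega) (by omega)] at hv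
    simp [east_occupied_of_le ho (by omega) (by omega : (m : ℤ) - 1 - j ≤ k - 2) (by omega) hocc]
      at hv

lemma hasStat_Phi_iff_hasStat (ho : o ∈ Config m) (hk1 : 1 ≤ k) (hk : k ≤ m) :
    HasStat m (Phi m o) (m + 1 - k) ↔ HasStat m o k := by
  rw [hasStat_Phi_iff ho hk1 hk, hasStat_iff ho hk1 hk]

end Statistic

theorem Phi_bijection_and_refined_general (m : ℕ) :
    Set.InjOn (Phi m) (Config m) ∧
    (∀ o ∈ Config m, IceRule m (Phi m o)) ∧
    (∀ o ∈ Config m, ∀ k : ℕ, 1 ≤ k → k ≤ m →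
      HasStat m o k → HasStat m (Phi m o) (m + 1 - k)) ∧
    (∀ k : ℕ, 1 ≤ k → k ≤ m → Zref m k = Zref2 m (m + 1 - k)) := by
  refine ⟨(Phi_involutive m).injective.injOn, fun o ho => iceRule_Phi ho.1,
    fun o ho k hk1 hk => (hasStat_Phi_iff_hasStat ho hk1 hk).2, fun k hk1 hk => ?_⟩
  have hpreimage : {o ∈ Config m | HasStat m o k} =
      Config m ∩ Phi m ⁻¹' {o | HasStat m o (m + 1 - k)} :=
    Set.ext fun o => and_congr_right fun ho => (hasStat_Phi_iff_hasStat ho hk1 hk).symm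
  rw [Zref, Zref2, hpreimage, ← Set.ncard_image_of_injective _ (Phi_involutive m).injective,
    Set.image_inter_preimage]
  rfl

/-- `Φ` is a bijection from the DWBC3 configurations on `T_m` onto a
set of ice-rule configurations on `T_m` (the 20V₂ model), and it maps configurations
with DWBC3 statistic `k` to configurations with statistic `m+1-k`; consequently
`Z_{m,k}^{20V3} = Z_{m,m+1-k}^{20V2}` for all `k = 1, …, m`. -/
theorem Phi_bijection_and_refined (m : ℕ) (hm : 1 ≤ m) :
    Set.InjOn (Phi m) (Config m) ∧
    (∀ o ∈ Config m, IceRule m (Phi m o)) ∧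
    (∀ o ∈ Config m, ∀ k : ℕ, 1 ≤ k → k ≤ m →
      HasStat m o k → HasStat m (Phi m o) (m + 1 - k)) ∧
    (∀ k : ℕ, 1 ≤ k → k ≤ m → Zref m k = Zref2 m (m + 1 - k)) :=
  Phi_bijection_and_refined_general m

end TwentyV
end

section
/- For all real η, λ, μ, setting λ̂ = π − (λ+η+μ)/2 and μ̂ = π − (3λ+η−μ)/2, the 20V weight functions satisfy the seven identities: ω_0(λ̂,μ̂) = ω_1(λ,μ), ω_1(λ̂,μ̂) = ω_0(λ,μ), ω_2(λ̂,μ̂) = ω_4(λ,μ), ω_4(λ̂,μ̂) = ω_2(λ,μ), ω_3(λ̂,μ̂) = ω_3(λ,μ), ω_5(λ̂,μ̂) = ω_5(λ,μ), ω_6(λ̂,μ̂) = ω_6(λ,μ). In other words, the substitution (λ,μ) ↦ (λ̂,μ̂) permutes the weights by π = (0 1)(2 4). -/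
open Real

/-- The seven 20V weight functions `ω_0, …, ω_6` (with normalization `ν = 1`),
as functions of the spectral parameters `λ` (here `lam`) and `μ` (here `mu`),
for a fixed quantum parameter `η`. -/
noncomputable def omega20V (η lam mu : ℝ) : Fin 7 → ℝ :=
  ![sin (lam + η) * sin ((lam + 3 * η - mu) / 2) * sin ((lam + 3 * η + mu) / 2),
    sin (lam - η) * sin ((lam + 3 * η - mu) / 2) * sin ((lam - η + mu) / 2),
    sin (2 * η) * sin (lam - η) * sin ((lam + 3 * η - mu) / 2),
    sin (2 * η) ^ 3 + sin (lam + η) * sin ((lam - η + mu) / 2) * sin ((lam - η - mu) / 2),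
    sin (2 * η) * sin ((lam + 3 * η + mu) / 2) * sin ((lam + 3 * η - mu) / 2),
    sin (2 * η) * sin (lam - η) * sin ((lam + 3 * η + mu) / 2),
    sin (lam - η) * sin ((lam + 3 * η + mu) / 2) * sin ((lam - η - mu) / 2)]

/-- Setting `λ̂ = π - (λ+η+μ)/2` and `μ̂ = π - (3λ+η-μ)/2`, the
substitution `(λ,μ) ↦ (λ̂,μ̂)` permutes the 20V weights by `π = (0 1)(2 4)`. -/
theorem omega20V_hat_perm (η lam mu : ℝ) :
    omega20V η (π - (lam + η + mu) / 2) (π - (3 * lam + η - mu) / 2) 0 = omega20V η lam mu 1 ∧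
    omega20V η (π - (lam + η + mu) / 2) (π - (3 * lam + η - mu) / 2) 1 = omega20V η lam mu 0 ∧
    omega20V η (π - (lam + η + mu) / 2) (π - (3 * lam + η - mu) / 2) 2 = omega20V η lam mu 4 ∧
    omega20V η (π - (lam + η + mu) / 2) (π - (3 * lam + η - mu) / 2) 4 = omega20V η lam mu 2 ∧
    omega20V η (π - (lam + η + mu) / 2) (π - (3 * lam + η - mu) / 2) 3 = omega20V η lam mu 3 ∧
    omega20V η (π - (lam + η + mu) / 2) (π - (3 * lam + η - mu) / 2) 5 = omega20V η lam mu 5 ∧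
    omega20V η (π - (lam + η + mu) / 2) (π - (3 * lam + η - mu) / 2) 6 = omega20V η lam mu 6 := by
  have s1 : sin (π - (lam + η + mu) / 2 + η) = sin ((lam - η + mu) / 2) := by
    rw [show π - (lam + η + mu) / 2 + η = π - (lam - η + mu) / 2 by ring, sin_pi_sub]
  have s2 : sin ((π - (lam + η + mu) / 2 + 3 * η - (π - (3 * lam + η - mu) / 2)) / 2)
      = sin ((lam + 3 * η - mu) / 2) := by ring_nf
  have s3 : sin ((π - (lam + η + mu) / 2 + 3 * η + (π - (3 * lam + η - mu) / 2)) / 2)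
      = sin (lam - η) := by
    rw [show (π - (lam + η + mu) / 2 + 3 * η + (π - (3 * lam + η - mu) / 2)) / 2
      = π - (lam - η) by ring, sin_pi_sub]
  have s4 : sin (π - (lam + η + mu) / 2 - η) = sin ((lam + 3 * η + mu) / 2) := by
    rw [show π - (lam + η + mu) / 2 - η = π - (lam + 3 * η + mu) / 2 by ring, sin_pi_sub]
  have s5 : sin ((π - (lam + η + mu) / 2 - η + (π - (3 * lam + η - mu) / 2)) / 2)
      = sin (lam + η) := by
    rw [show (π - (lam + η + mu) / 2 - η + (π - (3 * lam + η - mu) / 2)) / 2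
      = π - (lam + η) by ring, sin_pi_sub]
  have s6 : sin ((π - (lam + η + mu) / 2 - η - (π - (3 * lam + η - mu) / 2)) / 2)
      = sin ((lam - η - mu) / 2) := by ring_nf
  have h0 : ∀ a b c : ℝ, omega20V a b c 0
      = sin (b + a) * sin ((b + 3 * a - c) / 2) * sin ((b + 3 * a + c) / 2) := fun _ _ _ => rfl
  have h1 : ∀ a b c : ℝ, omega20V a b c 1
      = sin (b - a) * sin ((b + 3 * a - c) / 2) * sin ((b - a + c) / 2) := fun _ _ _ => rfl
  have h2 : ∀ a b c : ℝ, omega20V a b c 2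
      = sin (2 * a) * sin (b - a) * sin ((b + 3 * a - c) / 2) := fun _ _ _ => rfl
  have h3 : ∀ a b c : ℝ, omega20V a b c 3
      = sin (2 * a) ^ 3 + sin (b + a) * sin ((b - a + c) / 2) * sin ((b - a - c) / 2) :=
    fun _ _ _ => rfl
  have h4 : ∀ a b c : ℝ, omega20V a b c 4
      = sin (2 * a) * sin ((b + 3 * a + c) / 2) * sin ((b + 3 * a - c) / 2) := fun _ _ _ => rfl
  have h5 : ∀ a b c : ℝ, omega20V a b c 5
      = sin (2 * a) * sin (b - a) * sin ((b + 3 * a + c) / 2) := fun _ _ _ => rfl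
  have h6 : ∀ a b c : ℝ, omega20V a b c 6
      = sin (b - a) * sin ((b + 3 * a + c) / 2) * sin ((b - a - c) / 2) := fun _ _ _ => rfl
  refine ⟨?_, ?_, ?_, ?_, ?_, ?_, ?_⟩ <;>
    simp only [h0, h1, h2, h3, h4, h5, h6, s1, s2, s3, s4, s5, s6] <;> ring
end

section
/- For all real η, λ, μ, setting λ̄ = π − (λ+η−μ)/2 and μ̄ = π − (3λ+η+μ)/2, the 20V weight functions satisfy the seven identities: ω_0(λ̄,μ̄) = ω_6(λ,μ), ω_6(λ̄,μ̄) = ω_1(λ,μ), ω_1(λ̄,μ̄) = ω_0(λ,μ), ω_2(λ̄,μ̄) = ω_4(λ,μ), ω_4(λ̄,μ̄) = ω_5(λ,μ), ω_5(λ̄,μ̄) = ω_2(λ,μ), ω_3(λ̄,μ̄) = ω_3(λ,μ). -/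
open Real

private lemma omega20V_eval (η lam mu : ℝ) :
    omega20V η lam mu 0
      = sin (lam + η) * sin ((lam + 3 * η - mu) / 2) * sin ((lam + 3 * η + mu) / 2) ∧
    omega20V η lam mu 1
      = sin (lam - η) * sin ((lam + 3 * η - mu) / 2) * sin ((lam - η + mu) / 2) ∧
    omega20V η lam mu 2
      = sin (2 * η) * sin (lam - η) * sin ((lam + 3 * η - mu) / 2) ∧
    omega20V η lam mu 3
      = sin (2 * η) ^ 3 + sin (lam + η) * sin ((lam - η + mu) / 2) * sin ((lam - η - mu) / 2) ∧
    omega20V η lam mu 4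
      = sin (2 * η) * sin ((lam + 3 * η + mu) / 2) * sin ((lam + 3 * η - mu) / 2) ∧
    omega20V η lam mu 5
      = sin (2 * η) * sin (lam - η) * sin ((lam + 3 * η + mu) / 2) ∧
    omega20V η lam mu 6
      = sin (lam - η) * sin ((lam + 3 * η + mu) / 2) * sin ((lam - η - mu) / 2) :=
  ⟨rfl, rfl, rfl, rfl, rfl, rfl, rfl⟩

/-- Setting `λ̄ = π - (λ+η-μ)/2` and `μ̄ = π - (3λ+η+μ)/2`, the 20V
weight functions satisfy the seven stated identities. -/
theorem omega20V_bar_perm (η lam mu : ℝ) :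
    omega20V η (π - (lam + η - mu) / 2) (π - (3 * lam + η + mu) / 2) 0 = omega20V η lam mu 6 ∧
    omega20V η (π - (lam + η - mu) / 2) (π - (3 * lam + η + mu) / 2) 6 = omega20V η lam mu 1 ∧
    omega20V η (π - (lam + η - mu) / 2) (π - (3 * lam + η + mu) / 2) 1 = omega20V η lam mu 0 ∧
    omega20V η (π - (lam + η - mu) / 2) (π - (3 * lam + η + mu) / 2) 2 = omega20V η lam mu 4 ∧
    omega20V η (π - (lam + η - mu) / 2) (π - (3 * lam + η + mu) / 2) 4 = omega20V η lam mu 5 ∧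
    omega20V η (π - (lam + η - mu) / 2) (π - (3 * lam + η + mu) / 2) 5 = omega20V η lam mu 2 ∧
    omega20V η (π - (lam + η - mu) / 2) (π - (3 * lam + η + mu) / 2) 3 = omega20V η lam mu 3 := by
  have s1 : sin (π - (lam + η - mu) / 2 + η) = sin ((lam - η - mu) / 2) := by
    rw [show π - (lam + η - mu) / 2 + η = π - (lam - η - mu) / 2 by ring, sin_pi_sub]
  have s2 : sin (π - (lam + η - mu) / 2 - η) = sin ((lam + 3 * η - mu) / 2) := by
    rw [show π - (lam + η - mu) / 2 - η = π - (lam + 3 * η - mu) / 2 by ring, sin_pi_sub]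
  have s3 : sin ((π - (lam + η - mu) / 2 + 3 * η - (π - (3 * lam + η + mu) / 2)) / 2)
      = sin ((lam + 3 * η + mu) / 2) := by
    rw [show (π - (lam + η - mu) / 2 + 3 * η - (π - (3 * lam + η + mu) / 2)) / 2
        = (lam + 3 * η + mu) / 2 by ring]
  have s4 : sin ((π - (lam + η - mu) / 2 + 3 * η + (π - (3 * lam + η + mu) / 2)) / 2)
      = sin (lam - η) := by
    rw [show (π - (lam + η - mu) / 2 + 3 * η + (π - (3 * lam + η + mu) / 2)) / 2
        = π - (lam - η) by ring, sin_pi_sub]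
  have s5 : sin ((π - (lam + η - mu) / 2 - η + (π - (3 * lam + η + mu) / 2)) / 2)
      = sin (lam + η) := by
    rw [show (π - (lam + η - mu) / 2 - η + (π - (3 * lam + η + mu) / 2)) / 2
        = π - (lam + η) by ring, sin_pi_sub]
  have s6 : sin ((π - (lam + η - mu) / 2 - η - (π - (3 * lam + η + mu) / 2)) / 2)
      = sin ((lam - η + mu) / 2) := by
    rw [show (π - (lam + η - mu) / 2 - η - (π - (3 * lam + η + mu) / 2)) / 2
        = (lam - η + mu) / 2 by ring]
  obtain ⟨e0, e1, e2, e3, e4, e5, e6⟩ := omega20V_eval η lam mu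
  obtain ⟨f0, f1, f2, f3, f4, f5, f6⟩ :=
    omega20V_eval η (π - (lam + η - mu) / 2) (π - (3 * lam + η + mu) / 2)
  refine ⟨?_, ?_, ?_, ?_, ?_, ?_, ?_⟩ <;>
    simp only [e0, e1, e2, e3, e4, e5, e6, f0, f1, f2, f3, f4, f5, f6, s1, s2, s3, s4, s5, s6] <;>
    ring
end
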